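/- Let c_a ≤ c_b be real numbers with Δc = c_b − c_a, and let Δq > 0. Define Π_a(p_a, p_b) = (p_a − c_a)·( 1/2 + (p_b − p_a)/(2(Δq + |p_b − p_a|)) ) and Π_b(p_b, p_a) = (p_b − c_b)·( 1/2 + (p_a − p_b)/(2(Δq + |p_a − p_b|)) ). Then the simultaneous pricing game has a unique pure-strategy Nash equilibrium, in which p_a = c_b + Δq and p_b = c_b + Δq/4 + (3/4)·√(Δq² + (8/9)·Δq·Δc). Furthermore, if Δc > 0, then firm b's equilibrium market share 1/2 + (p_a − p_b)/(2(Δq + |p_a − p_b|)) (evaluated at the equilibrium prices) is a strictly increasing function of Δq, as is firm b's equilibrium profit. -/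

import Mathlib

/-!
Against a rival at price `q`, a firm with cost `c` that prices at `p ≥ q` earns
`dq / 2 + dq (q - c - dq) / (2 (dq + p - q))`: increasing towards the unattained value `dq / 2`
when `q < c + dq` (so there is no best response), constant when `q = c + dq`, decreasing
otherwise. Undercutting by `t = q - p ≥ 0`, its profit falls short of `(dq + 2 t₀)² / (2 dq)` by
`(t₀ - t)² / (dq + t)`, where `t₀ ≥ 0` solves the first-order condition; so for `q > c + dq` the
unique best response is `q - t₀`.

In equilibrium firm a therefore prices at `cb + dq`, which makes b indifferent among all prices
above it, and b sits above that by the `t ≥ 0` for which `pa` is a's best undercut, namely the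
root of `2 t² + 3 dq t = Δc dq`. Firm b then earns exactly `dq / 2`, with market share
`2 / (1 + 3 √(1 + 8 Δc / (9 dq)))`.
-/

/-- Market share of a firm pricing at p against a competitor pricing at q, with
quantity dissimilarity dq, under the L1-complexity model with linear G. -/
noncomputable def share (dq p q : ℝ) : ℝ :=
  1/2 + (q - p) / (2 * (dq + |q - p|))

/-- Firm a's profit. -/
noncomputable def profitA (ca dq p q : ℝ) : ℝ := (p - ca) * share dq p q

/-- Firm b's profit. -/
noncomputable def profitB (cb dq p q : ℝ) : ℝ := (p - cb) * share dq p q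

/-- Pure-strategy Nash equilibrium of the asymmetric pricing game. -/
def IsNE2 (ca cb dq pa pb : ℝ) : Prop :=
  (∀ p, profitA ca dq p pb ≤ profitA ca dq pa pb) ∧
  (∀ p, profitB cb dq p pa ≤ profitB cb dq pb pa)

/-- Firm a's equilibrium price. -/
noncomputable def paStar (cb dq : ℝ) : ℝ := cb + dq

/-- Firm b's equilibrium price. -/
noncomputable def pbStar (cb dc dq : ℝ) : ℝ :=
  cb + dq / 4 + (3/4) * Real.sqrt (dq ^ 2 + (8/9) * dq * dc)

def IsBestResponse (c dq q p : ℝ) : Prop :=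
  ∀ p', (p' - c) * share dq p' q ≤ (p - c) * share dq p q

theorem isNE2_iff {ca cb dq pa pb : ℝ} :
    IsNE2 ca cb dq pa pb ↔ IsBestResponse ca dq pb pa ∧ IsBestResponse cb dq pa pb :=
  Iff.rfl

section BestResponse

variable {c dq p q t : ℝ}

theorem share_of_le (hdq : 0 < dq) (hpq : p ≤ q) :
    share dq p q = (dq + 2 * (q - p)) / (2 * (dq + (q - p))) := by
  have : 0 < dq + (q - p) := by linarith
  rw [share, abs_of_nonneg (by linarith)]
  field_simp
  ring

theorem share_of_ge (hdq : 0 < dq) (hqp : q ≤ p) :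
    share dq p q = dq / (2 * (dq + (p - q))) := by
  have : 0 < dq + (p - q) := by linarith
  rw [share, abs_of_nonpos (by linarith), show dq + -(q - p) = dq + (p - q) by ring]
  field_simp
  ring

theorem profit_of_ge (hdq : 0 < dq) (hqp : q ≤ p) :
    (p - c) * share dq p q = dq / 2 + dq * (q - c - dq) / (2 * (dq + (p - q))) := by
  have : 0 < dq + (p - q) := by linarith
  rw [share_of_ge hdq hqp]
  field_simp
  ring

theorem profit_le_profit_self (hdq : 0 < dq) (hq : c + dq ≤ q) (hqp : q ≤ p) :
    (p - c) * share dq p q ≤ (q - c) * share dq q q := by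
  rw [profit_of_ge hdq hqp, profit_of_ge hdq le_rfl]
  gcongr
  · exact mul_nonneg hdq.le (by linarith)
  · linarith

theorem profit_lt_half (hdq : 0 < dq) (hq : q < c + dq) :
    (p - c) * share dq p q < dq / 2 := by
  rcases lt_or_ge p q with hpq | hqp
  · rw [share_of_le hdq hpq.le, ← mul_div_assoc, div_lt_div_iff₀ (by linarith) two_pos]
    nlinarith [mul_pos (sub_pos.2 hpq) (sub_pos.2 hpq),
      mul_nonneg (show 0 ≤ dq - (q - p) - (p - c) by linarith)
        (show 0 ≤ dq + 2 * (q - p) by linarith)]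
  · rw [profit_of_ge hdq hqp, add_lt_iff_neg_left]
    exact div_neg_of_neg_of_pos (mul_neg_of_pos_of_neg hdq (by linarith)) (by linarith)

theorem exists_profit_gt (hdq : 0 < dq) (hq : q < c + dq) {v : ℝ} (hv : v < dq / 2) :
    ∃ p, v < (p - c) * share dq p q := by
  set k := dq * (c + dq - q) / 2 with hk_def
  set ε := dq / 2 - v with hε_def
  have hk : 0 < k := by have := mul_pos hdq (sub_pos.2 hq); positivity
  have hε : 0 < ε := sub_pos.2 hv
  refine ⟨q + k / ε, ?_⟩
  have hgap : k / (dq + k / ε) < ε := by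
    rw [div_lt_iff₀ (by positivity), mul_add, mul_div_cancel₀ _ hε.ne']
    linarith [mul_pos hε hdq]
  rw [profit_of_ge hdq (by linarith [div_pos hk hε]), add_sub_cancel_left,
    show dq * (q - c - dq) = 2 * -k by rw [hk_def]; ring, mul_div_mul_left _ _ two_ne_zero,
    neg_div]
  linarith

theorem IsBestResponse.add_le (h : IsBestResponse c dq q p) (hdq : 0 < dq) : c + dq ≤ q := by
  by_contra! hq
  obtain ⟨p', hp'⟩ := exists_profit_gt hdq hq (profit_lt_half hdq hq (p := p))
  exact (h p').not_gt hp'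

/-- `2 t² + 4 dq t + dq² = (q - c) dq` is the first-order condition for the undercut `t`. -/
theorem sub_profit_eq_of_foc (hdq : 0 < dq)
    (hfoc : 2 * t ^ 2 + 4 * dq * t + dq ^ 2 = (q - c) * dq) (hpq : p ≤ q) :
    (dq + 2 * t) ^ 2 / (2 * dq) - (p - c) * share dq p q
      = (t - (q - p)) ^ 2 / (dq + (q - p)) := by
  have : 0 < dq + (q - p) := by linarith
  rw [share_of_le hdq hpq]
  field_simp
  linear_combination (dq + 2 * (q - p)) * hfoc

theorem profit_sub_of_foc (hdq : 0 < dq)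
    (hfoc : 2 * t ^ 2 + 4 * dq * t + dq ^ 2 = (q - c) * dq) (ht : 0 ≤ t) :
    (q - t - c) * share dq (q - t) q = (dq + 2 * t) ^ 2 / (2 * dq) := by
  have := sub_profit_eq_of_foc hdq hfoc (sub_le_self q ht)
  rw [sub_sub_cancel, sub_self, zero_pow two_ne_zero, zero_div] at this
  linarith

theorem profit_le_of_foc (hdq : 0 < dq)
    (hfoc : 2 * t ^ 2 + 4 * dq * t + dq ^ 2 = (q - c) * dq) (ht : 0 ≤ t) (p : ℝ) :
    (p - c) * share dq p q ≤ (dq + 2 * t) ^ 2 / (2 * dq) := by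
  have hbelow : ∀ p ≤ q, (p - c) * share dq p q ≤ (dq + 2 * t) ^ 2 / (2 * dq) :=
    fun p hpq ↦ sub_nonneg.1 <| (sub_profit_eq_of_foc hdq hfoc hpq).symm ▸
      div_nonneg (sq_nonneg _) (by linarith)
  rcases le_total p q with hpq | hqp
  · exact hbelow p hpq
  · have hq : c + dq ≤ q := by nlinarith
    exact (profit_le_profit_self hdq hq hqp).trans (hbelow q le_rfl)

theorem isBestResponse_sub_of_foc (hdq : 0 < dq)
    (hfoc : 2 * t ^ 2 + 4 * dq * t + dq ^ 2 = (q - c) * dq) (ht : 0 ≤ t) :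
    IsBestResponse c dq q (q - t) := fun p ↦
  (profit_sub_of_foc hdq hfoc ht).symm ▸ profit_le_of_foc hdq hfoc ht p

theorem exists_foc (hdq : 0 < dq) (hq : c + dq ≤ q) :
    ∃ t, 0 ≤ t ∧ 2 * t ^ 2 + 4 * dq * t + dq ^ 2 = (q - c) * dq := by
  have hX : dq ^ 2 ≤ (dq ^ 2 + (q - c) * dq) / 2 := by nlinarith
  refine ⟨√((dq ^ 2 + (q - c) * dq) / 2) - dq, ?_, ?_⟩
  · exact sub_nonneg.2 (Real.le_sqrt_of_sq_le hX)
  · linear_combination 2 * Real.sq_sqrt ((sq_nonneg dq).trans hX)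

theorem IsBestResponse.foc (h : IsBestResponse c dq q p) (hdq : 0 < dq) (hpq : p ≤ q) :
    2 * (q - p) ^ 2 + 4 * dq * (q - p) + dq ^ 2 = (q - c) * dq := by
  obtain ⟨t, ht, hfoc⟩ := exists_foc hdq (h.add_le hdq)
  have hdeficit := sub_profit_eq_of_foc hdq hfoc hpq
  have hmax := h (q - t)
  rw [profit_sub_of_foc hdq hfoc ht] at hmax
  have hsq : (t - (q - p)) ^ 2 ≤ 0 * (dq + (q - p)) :=
    (div_le_iff₀ (by linarith)).1 (by linarith)
  have : t = q - p := sub_eq_zero.1 <| pow_eq_zero_iff two_ne_zero |>.1 <|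
    le_antisymm (by linarith) (sq_nonneg _)
  rwa [← this]

theorem IsBestResponse.le (h : IsBestResponse c dq q p) (hdq : 0 < dq) (hq : c + dq < q) :
    p ≤ q := by
  by_contra! hqp
  have hself : IsBestResponse c dq q q := fun p' ↦
    (h p').trans (profit_le_profit_self hdq hq.le hqp.le)
  have := hself.foc hdq le_rfl
  nlinarith

theorem isBestResponse_of_ge (hdq : 0 < dq) (hq : q = c + dq) (hqp : q ≤ p) :
    IsBestResponse c dq q p := by
  subst hq
  intro p'
  have hfoc : 2 * 0 ^ 2 + 4 * dq * 0 + dq ^ 2 = (c + dq - c) * dq := by ring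
  have := profit_le_of_foc hdq hfoc le_rfl p'
  rw [show (dq + 2 * 0) ^ 2 / (2 * dq) = dq / 2 by field_simp; ring] at this
  rwa [profit_of_ge hdq hqp, show c + dq - c - dq = 0 by ring, mul_zero, zero_div, add_zero]

end BestResponse

section Equilibrium

variable {ca cb dc dq pa pb : ℝ}

theorem eq_pbStar_iff (hdq : 0 ≤ dq) (hdc : 0 ≤ dc) :
    pb = pbStar cb dc dq ↔ paStar cb dq ≤ pb ∧
      2 * (pb - paStar cb dq) ^ 2 + 3 * dq * (pb - paStar cb dq) = dc * dq := by
  set s := √(dq ^ 2 + (8 / 9) * dq * dc)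
  have hs2 : s ^ 2 = dq ^ 2 + (8 / 9) * dq * dc := Real.sq_sqrt (by positivity)
  have hs : dq ≤ s := Real.le_sqrt_of_sq_le (by nlinarith)
  have hstar : pbStar cb dc dq = paStar cb dq + 3 / 4 * (s - dq) := by
    rw [pbStar, paStar]; ring
  rw [hstar]
  constructor
  · rintro rfl
    exact ⟨by linarith, by linear_combination (9 / 8) * hs2⟩
  · rintro ⟨hle, hroot⟩
    have : (pb - paStar cb dq - 3 / 4 * (s - dq)) *
        (2 * (pb - paStar cb dq) + 3 / 2 * (s - dq) + 3 * dq) = 0 := by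
      linear_combination hroot - (9 / 8) * hs2
    rcases mul_eq_zero.1 this with h | h <;> linarith

theorem isNE2_star (hc : ca ≤ cb) (hdq : 0 < dq) :
    IsNE2 ca cb dq (paStar cb dq) (pbStar cb (cb - ca) dq) := by
  obtain ⟨hle, hroot⟩ := (eq_pbStar_iff hdq.le (sub_nonneg.2 hc)).1 rfl
  set t := pbStar cb (cb - ca) dq - paStar cb dq
  refine isNE2_iff.2 ⟨?_, isBestResponse_of_ge hdq rfl hle⟩
  have hfoc : 2 * t ^ 2 + 4 * dq * t + dq ^ 2 = (pbStar cb (cb - ca) dq - ca) * dq := by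
    rw [show pbStar cb (cb - ca) dq = cb + dq + t by simp only [t, paStar]; ring]
    linear_combination hroot
  simpa [t] using isBestResponse_sub_of_foc hdq hfoc (sub_nonneg.2 hle)

theorem IsNE2.eq_star (h : IsNE2 ca cb dq pa pb) (hc : ca ≤ cb) (hdq : 0 < dq) :
    pa = paStar cb dq ∧ pb = pbStar cb (cb - ca) dq := by
  obtain ⟨ha, hb⟩ := isNE2_iff.1 h
  have hpa := hb.add_le hdq
  have hpb := ha.add_le hdq
  have hle : pa ≤ pb := by
    by_contra! hlt
    have hfoc := hb.foc hdq hlt.le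
    rcases hpb.lt_or_eq with hpb | rfl
    · exact hlt.not_ge (ha.le hdq hpb)
    · nlinarith [mul_pos (sub_pos.2 hlt) hdq]
  have hpa_eq : pa = cb + dq := by
    by_contra hne
    have hpb_eq : pb = pa := (hb.le hdq (hpa.lt_of_ne (Ne.symm hne))).antisymm hle
    have hfoc := hb.foc hdq hpb_eq.le
    rw [hpb_eq, sub_self] at hfoc
    exact hne (by nlinarith)
  refine ⟨hpa_eq, (eq_pbStar_iff hdq.le (sub_nonneg.2 hc)).2 ?_⟩
  rw [paStar, ← hpa_eq]
  exact ⟨hle, by linear_combination ha.foc hdq hle + dq * hpa_eq⟩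

theorem profit_star (hdc : 0 ≤ dc) (hdq : 0 < dq) :
    (pbStar cb dc dq - cb) * share dq (pbStar cb dc dq) (paStar cb dq) = dq / 2 := by
  rw [profit_of_ge hdq ((eq_pbStar_iff hdq.le hdc).1 rfl).1, paStar,
    show cb + dq - cb - dq = 0 by ring, mul_zero, zero_div, add_zero]

theorem share_star (hdc : 0 ≤ dc) (hdq : 0 < dq) :
    share dq (pbStar cb dc dq) (paStar cb dq) = 2 / (1 + 3 * √(1 + 8 / 9 * dc / dq)) := by
  have hsqrt : √(dq ^ 2 + 8 / 9 * dq * dc) = dq * √(1 + 8 / 9 * dc / dq) := by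
    rw [show dq ^ 2 + 8 / 9 * dq * dc = dq ^ 2 * (1 + 8 / 9 * dc / dq) by field_simp,
      Real.sqrt_mul' _ (by positivity), Real.sqrt_sq hdq.le]
  rw [share_of_ge hdq ((eq_pbStar_iff hdq.le hdc).1 rfl).1, pbStar, paStar, hsqrt]
  have := Real.sqrt_nonneg (1 + 8 / 9 * dc / dq)
  rw [div_eq_div_iff (by nlinarith) (by positivity)]
  ring

theorem strictMonoOn_share_star (hdc : 0 < dc) :
    StrictMonoOn (fun dq ↦ share dq (pbStar cb dc dq) (paStar cb dq)) (Set.Ioi 0) := by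
  intro x (hx : 0 < x) y (hy : 0 < y) hxy
  simp only [share_star hdc.le hx, share_star hdc.le hy]
  gcongr

end Equilibrium

/-- Lemma 5 — existence and uniqueness of the pure-strategy
equilibrium of the asymmetric pricing game, with firm b's equilibrium market
share and profit strictly increasing in Δq when Δc > 0. -/
theorem stmt_17 (ca cb : ℝ) (hc : ca ≤ cb) :
    (∀ dq : ℝ, 0 < dq →
      IsNE2 ca cb dq (paStar cb dq) (pbStar cb (cb - ca) dq) ∧
      ∀ pa pb, IsNE2 ca cb dq pa pb →
        pa = paStar cb dq ∧ pb = pbStar cb (cb - ca) dq) ∧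
    (0 < cb - ca →
      StrictMonoOn
        (fun dq => share dq (pbStar cb (cb - ca) dq) (paStar cb dq)) (Set.Ioi 0) ∧
      StrictMonoOn
        (fun dq => (pbStar cb (cb - ca) dq - cb) *
          share dq (pbStar cb (cb - ca) dq) (paStar cb dq)) (Set.Ioi 0)) := by
  refine ⟨fun dq hdq ↦ ⟨isNE2_star hc hdq, fun pa pb h ↦ h.eq_star hc hdq⟩,
    fun hdc ↦ ⟨strictMonoOn_share_star hdc, ?_⟩⟩
  intro x (hx : 0 < x) y (hy : 0 < y) hxy
  simp only [profit_star hdc.le hx, profit_star hdc.le hy]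
  linarith
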